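/- arXiv:2510.16680 — 6 statements merged into one kernel-verified Lean document; each statement's English description precedes it below -/
import Mathlib

section
/- Strong Lyapunov property for the HNAG flow: Let f : R^d → R be differentiable and μ-strongly convex with minimizer x⋆, let β > 0, and define E(x,y) = f(x) − f(x⋆) + (μ/2)‖y − x⋆‖² and the vector field G(x,y) = (y − x − β∇f(x), x − y − (1/μ)∇f(x)). Then −⟨∇E(x,y), G(x,y)⟩ ≥ E(x,y) + β‖∇f(x)‖² + (μ/2)‖x − y‖² for all x, y. -/
open RealInnerProductSpace

theorem strong_lyapunov_HNAG {E : Type*} [NormedAddCommGroup E] [InnerProductSpace ℝ E]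
    [CompleteSpace E] (f : E → ℝ) (f' : E → E) (μ β : ℝ) (hμ : 0 < μ) (hβ : 0 < β)
    (hf : ∀ x, HasGradientAt f (f' x) x)
    (hsc : ∀ x y, f x - f y - ⟪f' y, x - y⟫ ≥ μ / 2 * ‖x - y‖ ^ 2)
    (xs : E) (hcrit : f' xs = 0) (x y : E) :
    -(⟪f' x, y - x - β • f' x⟫ + ⟪μ • (y - xs), x - y - (1 / μ) • f' x⟫)
      ≥ (f x - f xs + μ / 2 * ‖y - xs‖ ^ 2) + β * ‖f' x‖ ^ 2 + μ / 2 * ‖x - y‖ ^ 2 := by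
  have h1 := hsc xs x
  have e4 : ⟪f' x, xs - x⟫ = -⟪f' x, x - xs⟫ := by
    rw [show xs - x = -(x - xs) by abel, inner_neg_right]
  have e1 : ⟪f' x, y - x - β • f' x⟫ = ⟪f' x, y - x⟫ - β * ‖f' x‖ ^ 2 := by
    rw [inner_sub_right, real_inner_smul_right, real_inner_self_eq_norm_sq]
  have e2 : ⟪μ • (y - xs), x - y - (1 / μ) • f' x⟫
      = μ * ⟪y - xs, x - y⟫ - ⟪y - xs, f' x⟫ := by
    rw [real_inner_smul_left, inner_sub_right, real_inner_smul_right]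
    field_simp
  have e3 : ⟪y - xs, f' x⟫ - ⟪f' x, y - x⟫ = ⟪f' x, x - xs⟫ := by
    rw [real_inner_comm (f' x) (y - xs), ← inner_sub_right]
    congr 1
    abel
  have key : ‖xs - x‖ ^ 2 = ‖x - y‖ ^ 2 + 2 * ⟪x - y, y - xs⟫ + ‖y - xs‖ ^ 2 := by
    rw [show xs - x = -((x - y) + (y - xs)) by abel, norm_neg, norm_add_sq_real]
  have keyμ : μ / 2 * ‖xs - x‖ ^ 2
      = μ / 2 * ‖x - y‖ ^ 2 + μ * ⟪x - y, y - xs⟫ + μ / 2 * ‖y - xs‖ ^ 2 := by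
    rw [key]; ring
  have e5 : ⟪y - xs, x - y⟫ = ⟪x - y, y - xs⟫ := real_inner_comm _ _
  rw [e4] at h1
  rw [e1, e2, e5]
  linarith [h1, keyμ, e3]
end

section
/- Strong Lyapunov property for the HNAG+ flow: Let f be differentiable, μ-strongly convex with minimizer x⋆, β > 0, f_{−μ}(x) = f(x) − (μ/2)‖x − x⋆‖², E(x,y) = D_{f_{−μ}}(x, x⋆) + μ‖y − x⋆‖², and G(x,y) = (2(y − x) − β∇f(x), x − y − (1/μ)∇f(x)). Then −⟨∇E(x,y), G(x,y)⟩ ≥ 2E(x,y) + β‖∇f_{−μ}(x)‖² + βμ⟨∇f_{−μ}(x), x − x⋆⟩. -/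
open RealInnerProductSpace

theorem strong_lyapunov_HNAGplus {E : Type*} [NormedAddCommGroup E] [InnerProductSpace ℝ E]
    [CompleteSpace E] (f : E → ℝ) (f' : E → E) (μ β : ℝ) (hμ : 0 < μ) (hβ : 0 < β)
    (hf : ∀ x, HasGradientAt f (f' x) x)
    (hsc : ∀ x y, f x - f y - ⟪f' y, x - y⟫ ≥ μ / 2 * ‖x - y‖ ^ 2)
    (xs : E) (hcrit : f' xs = 0) (x y : E) :
    -(⟪f' x - μ • (x - xs), 2 • (y - x) - β • f' x⟫
        + ⟪(2 * μ) • (y - xs), x - y - (1 / μ) • f' x⟫)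
      ≥ 2 * (((f x - μ / 2 * ‖x - xs‖ ^ 2) - (f xs - μ / 2 * ‖xs - xs‖ ^ 2)
            - ⟪f' xs - μ • (xs - xs), x - xs⟫) + μ * ‖y - xs‖ ^ 2)
        + β * ‖f' x - μ • (x - xs)‖ ^ 2
        + β * μ * ⟪f' x - μ • (x - xs), x - xs⟫ := by
  have hμ' : (μ:ℝ) ≠ 0 := ne_of_gt hμ
  have h1 := hsc xs x
  have key : ⟪f' x, x - xs⟫ ≥ f x - f xs + μ / 2 * ‖x - xs‖ ^ 2 := by
    have hn : ‖xs - x‖ = ‖x - xs‖ := norm_sub_rev xs x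
    rw [hn] at h1
    have : ⟪f' x, xs - x⟫ = -⟪f' x, x - xs⟫ := by
      rw [← inner_neg_right, neg_sub]
    rw [this] at h1
    linarith
  have hid :
      -(⟪f' x - μ • (x - xs), 2 • (y - x) - β • f' x⟫
        + ⟪(2 * μ) • (y - xs), x - y - (1 / μ) • f' x⟫)
      - (2 * (((f x - μ / 2 * ‖x - xs‖ ^ 2) - (f xs - μ / 2 * ‖xs - xs‖ ^ 2)
            - ⟪f' xs - μ • (xs - xs), x - xs⟫) + μ * ‖y - xs‖ ^ 2)
        + β * ‖f' x - μ • (x - xs)‖ ^ 2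
        + β * μ * ⟪f' x - μ • (x - xs), x - xs⟫)
      = 2 * (⟪f' x, x - xs⟫ - (f x - f xs + μ / 2 * ‖x - xs‖ ^ 2)) := by
    simp only [two_smul, hcrit, sub_self, smul_zero, ← real_inner_self_eq_norm_sq,
      inner_sub_left, inner_sub_right, inner_add_left, inner_add_right,
      real_inner_smul_left, real_inner_smul_right, inner_zero_left, inner_zero_right,
      real_inner_comm x xs, real_inner_comm y xs, real_inner_comm y x,
      real_inner_comm (f' x) x, real_inner_comm (f' x) xs, real_inner_comm (f' x) y]
    field_simp
    ring
  linarith [hid, key]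
end

section
/- One-step inequality for HNAG: Let f be differentiable, μ-strongly convex, and L-smooth, with minimizer x⋆. Let α, β > 0 and let (x_{k+1}, y_{k+1}) satisfy (x_{k+1} − x_k)/α = y_k − x_{k+1} − β∇f(x_k) and (y_{k+1} − y_k)/α = x_{k+1} − y_{k+1} − (1/μ)∇f(x_{k+1}). Define E(x,y) = f(x) − f(x⋆) + (μ/2)‖y − x⋆‖². Then (1+α)E(x_{k+1}, y_{k+1}) ≤ E(x_k, y_k) + (α²/(2μ) − αβ/2)‖∇f(x_{k+1})‖² − (αβ/2)‖∇f(x_k)‖² + (αβ/2)‖∇f(x_{k+1}) − ∇f(x_k)‖² − D_f(x_k, x_{k+1}). -/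
open RealInnerProductSpace

theorem hnag_one_step {E : Type*} [NormedAddCommGroup E] [InnerProductSpace ℝ E]
    [CompleteSpace E] (f : E → ℝ) (f' : E → E) (μ L α β : ℝ)
    (hμ : 0 < μ) (hμL : μ ≤ L) (hα : 0 < α) (hβ : 0 < β)
    (hf : ∀ x, HasGradientAt f (f' x) x)
    (hsc : ∀ x y, f x - f y - ⟪f' y, x - y⟫ ≥ μ / 2 * ‖x - y‖ ^ 2)
    (hsmooth : ∀ x y, ‖f' x - f' y‖ ≤ L * ‖x - y‖)
    (xs : E) (hcrit : f' xs = 0)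
    (xk yk xk1 yk1 : E)
    (hx : (1 / α) • (xk1 - xk) = yk - xk1 - β • f' xk)
    (hy : (1 / α) • (yk1 - yk) = xk1 - yk1 - (1 / μ) • f' xk1) :
    (1 + α) * (f xk1 - f xs + μ / 2 * ‖yk1 - xs‖ ^ 2)
      ≤ (f xk - f xs + μ / 2 * ‖yk - xs‖ ^ 2)
        + (α ^ 2 / (2 * μ) - α * β / 2) * ‖f' xk1‖ ^ 2
        - α * β / 2 * ‖f' xk‖ ^ 2
        + α * β / 2 * ‖f' xk1 - f' xk‖ ^ 2
        - (f xk - f xk1 - ⟪f' xk1, xk - xk1⟫) := by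
  have hα' : α ≠ 0 := ne_of_gt hα
  have hμ' : μ ≠ 0 := ne_of_gt hμ
  have exk' : xk1 - xk = α • (yk - xk1 - β • f' xk) := by
    rw [← hx, smul_smul, mul_one_div_cancel hα', one_smul]
  have eyk' : yk1 - yk = α • (xk1 - yk1 - (1 / μ) • f' xk1) := by
    rw [← hy, smul_smul, mul_one_div_cancel hα', one_smul]
  have exk : xk = xk1 - α • (yk - xk1 - β • f' xk) := by rw [← exk']; abel
  have eyk : yk = yk1 - α • (xk1 - yk1 - (1 / μ) • f' xk1) := by rw [← eyk']; abel
  have hs := hsc xs xk1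
  have hnn : 0 ≤ μ / 2 * (α ^ 2 + α) * ‖xk1 - yk1‖ ^ 2 := by positivity
  have key : ((1 + α) * (f xk1 - f xs + μ / 2 * ‖yk1 - xs‖ ^ 2))
      - ((f xk - f xs + μ / 2 * ‖yk - xs‖ ^ 2)
        + (α ^ 2 / (2 * μ) - α * β / 2) * ‖f' xk1‖ ^ 2
        - α * β / 2 * ‖f' xk‖ ^ 2
        + α * β / 2 * ‖f' xk1 - f' xk‖ ^ 2
        - (f xk - f xk1 - ⟪f' xk1, xk - xk1⟫))
      = α * (f xk1 - f xs + ⟪f' xk1, xs - xk1⟫ + μ / 2 * ‖xs - xk1‖ ^ 2)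
        - μ / 2 * (α ^ 2 + α) * ‖xk1 - yk1‖ ^ 2 := by
    set g0 := f' xk with hg0
    set g1 := f' xk1 with hg1
    rw [exk, eyk]
    simp only [← real_inner_self_eq_norm_sq, inner_sub_left, inner_sub_right,
      inner_add_left, inner_add_right, inner_smul_left, inner_smul_right,
      RCLike.conj_to_real, real_inner_comm yk1 xs, real_inner_comm xk1 xs,
      real_inner_comm yk1 xk1, real_inner_comm g0 g1,
      real_inner_comm yk1 g1, real_inner_comm xs g1, real_inner_comm xk1 g1,
      real_inner_comm yk1 g0, real_inner_comm xs g0, real_inner_comm xk1 g0]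
    field_simp
    ring
  have hs' : α * (f xk1 - f xs + ⟪f' xk1, xs - xk1⟫ + μ / 2 * ‖xs - xk1‖ ^ 2) ≤ 0 := by
    have : f xk1 - f xs + ⟪f' xk1, xs - xk1⟫ + μ / 2 * ‖xs - xk1‖ ^ 2 ≤ 0 := by linarith
    nlinarith
  linarith [key, hs', hnn]
end

section
/- Linear convergence of HNAG: Let f be differentiable, μ-strongly convex, and L-smooth with minimizer x⋆, and let κ = L/μ. With α = √(2μ/L) and β = 1/(Lα), the HNAG iterates satisfy E(x_{k+1}, y_{k+1}) − (1/(2L))‖∇f(x_{k+1})‖² ≤ (1 + √(2/κ))^{-1} (E(x_k, y_k) − (1/(2L))‖∇f(x_k)‖²), where E(x,y) = f(x) − f(x⋆) + (μ/2)‖y − x⋆‖². -/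
/-!
Along the scheme, (1 + α) 𝓔(x₁, y₁) - 𝓔(x₀, y₀) for
𝓔(x, y) = f x - f x⋆ + μ/2 ‖y - x⋆‖² - ‖∇f x‖² / (2L) is bounded, using the co-coercivity
estimate f x₀ - f x₁ - ⟪∇f x₁, x₀ - x₁⟫ ≥ ‖∇f x₀ - ∇f x₁‖² / (2L) and strong convexity between
x₁ and x⋆, by a quadratic form in x₁ - x⋆, x₁ - y₁, ∇f x₀, ∇f x₁. For μ = L α² / 2 and
β = 1 / (L α) it collapses to -α ‖∇f x₁‖² / (2L) - μ α (1 + α) ‖x₁ - y₁‖² / 2 ≤ 0.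
-/

open RealInnerProductSpace

section LipschitzGradient

variable {E : Type*} [NormedAddCommGroup E] [InnerProductSpace ℝ E] [CompleteSpace E]
  {f : E → ℝ} {f' : E → E} {L : ℝ}

theorem hasDerivAt_comp_add_smul (hf : ∀ x, HasGradientAt f (f' x) x) (x v : E) (t : ℝ) :
    HasDerivAt (fun t : ℝ => f (x + t • v)) ⟪f' (x + t • v), v⟫ t := by
  have hline : HasDerivAt (fun t : ℝ => x + t • v) v t := by
    simpa using ((hasDerivAt_id t).smul_const v).const_add x
  have h := (hf (x + t • v)).hasFDerivAt.comp_hasDerivAt t hline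
  simp only [InnerProductSpace.toDual_apply_apply] at h
  exact h

theorem le_add_inner_add_sq_of_lipschitz_gradient (hf : ∀ x, HasGradientAt f (f' x) x)
    (hsmooth : ∀ x y, ‖f' x - f' y‖ ≤ L * ‖x - y‖) (x y : E) :
    f y ≤ f x + ⟪f' x, y - x⟫ + L / 2 * ‖y - x‖ ^ 2 := by
  set v := y - x
  let g : ℝ → ℝ := fun t => f (x + t • v) - t * ⟪f' x, v⟫ - L / 2 * t ^ 2 * ‖v‖ ^ 2
  have hg : ∀ t, HasDerivAt g (⟪f' (x + t • v) - f' x, v⟫ - L * t * ‖v‖ ^ 2) t := by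
    intro t
    have hquad := ((hasDerivAt_pow 2 t).const_mul (L / 2)).mul_const (‖v‖ ^ 2)
    refine (((hasDerivAt_comp_add_smul hf x v t).sub
      ((hasDerivAt_id t).mul_const ⟪f' x, v⟫)).sub hquad).congr_deriv ?_
    simp only [inner_sub_left, Nat.cast_ofNat, one_mul]
    ring
  have hg_nonpos : ∀ t, 0 ≤ t → ⟪f' (x + t • v) - f' x, v⟫ - L * t * ‖v‖ ^ 2 ≤ 0 := by
    intro t ht
    rw [sub_nonpos]
    calc ⟪f' (x + t • v) - f' x, v⟫ ≤ ‖f' (x + t • v) - f' x‖ * ‖v‖ := real_inner_le_norm _ _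
      _ ≤ L * ‖t • v‖ * ‖v‖ := by gcongr; simpa using hsmooth (x + t • v) x
      _ = L * t * ‖v‖ ^ 2 := by rw [norm_smul, Real.norm_of_nonneg ht]; ring
  have hanti : AntitoneOn g (Set.Icc 0 1) :=
    antitoneOn_of_hasDerivWithinAt_nonpos (convex_Icc 0 1)
      (fun t _ => (hg t).continuousAt.continuousWithinAt)
      (fun t _ => (hg t).hasDerivWithinAt)
      (fun t ht => hg_nonpos t (interior_subset ht).1)
  have h01 := hanti (Set.left_mem_Icc.2 zero_le_one) (Set.right_mem_Icc.2 zero_le_one) zero_le_one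
  simp only [g, v, zero_smul, add_zero, one_smul, add_sub_cancel] at h01
  linarith

theorem sq_norm_sub_gradient_le_bregman (hL : 0 < L) (hf : ∀ x, HasGradientAt f (f' x) x)
    (hconv : ∀ x y, 0 ≤ f x - f y - ⟪f' y, x - y⟫)
    (hsmooth : ∀ x y, ‖f' x - f' y‖ ≤ L * ‖x - y‖) (x y : E) :
    1 / (2 * L) * ‖f' x - f' y‖ ^ 2 ≤ f x - f y - ⟪f' y, x - y⟫ := by
  set d := f' x - f' y
  -- the descent lemma at a gradient step from `x`, convexity between that point and `y`
  set z := x - L⁻¹ • d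
  have hdesc := le_add_inner_add_sq_of_lipschitz_gradient hf hsmooth x z
  have hzy := hconv z y
  have hzx : z - x = -(L⁻¹ • d) := by simp only [z]; abel
  have hinner_zx : ⟪f' x, z - x⟫ = -(L⁻¹ * ⟪f' x, d⟫) := by
    rw [hzx, inner_neg_right, real_inner_smul_right]
  have hinner_zy : ⟪f' y, z - y⟫ = ⟪f' y, x - y⟫ - L⁻¹ * ⟪f' y, d⟫ := by
    rw [show z - y = (x - y) - L⁻¹ • d by simp only [z]; abel, inner_sub_right,
      real_inner_smul_right]
  have hnorm_zx : L / 2 * ‖z - x‖ ^ 2 = L⁻¹ / 2 * ‖d‖ ^ 2 := by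
    rw [hzx, norm_neg, norm_smul, mul_pow, Real.norm_eq_abs, sq_abs]
    field_simp
  have hd : ⟪f' x, d⟫ - ⟪f' y, d⟫ = ‖d‖ ^ 2 := by
    rw [← inner_sub_left, real_inner_self_eq_norm_sq]
  rw [hinner_zx, hnorm_zx] at hdesc
  rw [hinner_zy] at hzy
  have hLd : L⁻¹ * ⟪f' x, d⟫ - L⁻¹ * ⟪f' y, d⟫ = L⁻¹ * ‖d‖ ^ 2 := by rw [← mul_sub, hd]
  rw [show 1 / (2 * L) = L⁻¹ / 2 by ring]
  linarith

end LipschitzGradient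

theorem hnag_step_identity {E : Type*} [NormedAddCommGroup E] [InnerProductSpace ℝ E]
    {μ L α β : ℝ} (hL : L ≠ 0) (hα : α ≠ 0) (hμ : μ = L * α ^ 2 / 2) (hβ : β = 1 / (L * α))
    {x₀ y₀ x₁ y₁ xs g₀ g₁ : E}
    (hx : (1 / α) • (x₁ - x₀) = y₀ - x₁ - β • g₀)
    (hy : (1 / α) • (y₁ - y₀) = x₁ - y₁ - (1 / μ) • g₁) :
    -⟪g₁, x₀ - x₁⟫ - α * ⟪g₁, xs - x₁⟫ + μ / 2 * ((1 + α) * ‖y₁ - xs‖ ^ 2 - ‖y₀ - xs‖ ^ 2)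
        - (1 + α) / (2 * L) * ‖g₁‖ ^ 2 + 1 / (2 * L) * ‖g₀‖ ^ 2
      = 1 / (2 * L) * ‖g₀ - g₁‖ ^ 2 + α * (μ / 2 * ‖xs - x₁‖ ^ 2)
        - α / (2 * L) * ‖g₁‖ ^ 2 - μ * α * (1 + α) / 2 * ‖x₁ - y₁‖ ^ 2 := by
  -- Solving the scheme for `x₀` and `y₀` leaves a polynomial identity in the inner products of
  -- `x₁ - xs`, `x₁ - y₁`, `g₀`, `g₁`.
  rw [one_div] at hx hy
  have hx' := (inv_smul_eq_iff₀ hα).1 hx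
  have hy' := (inv_smul_eq_iff₀ hα).1 hy
  have hx₀ : x₀ - x₁ = (α * (1 + α)) • (x₁ - y₁) - (α ^ 2 / μ) • g₁ + (α * β) • g₀ := by
    linear_combination (norm := module) (-1 : ℝ) • hx' + α • hy'
  have hxs : xs - x₁ = -(x₁ - xs) := (neg_sub _ _).symm
  have hy₀ : y₀ - xs = (x₁ - xs) - (1 + α) • (x₁ - y₁) + (α / μ) • g₁ := by
    linear_combination (norm := module) (-1 : ℝ) • hy'
  have hy₁ : y₁ - xs = (x₁ - xs) - (x₁ - y₁) := by abel
  rw [hx₀, hxs, hy₀, hy₁, hβ, hμ]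
  set u := x₁ - xs
  set d := x₁ - y₁
  simp only [← real_inner_self_eq_norm_sq, inner_sub_left, inner_sub_right, inner_add_left,
    inner_add_right, inner_neg_left, inner_neg_right, real_inner_smul_left, real_inner_smul_right,
    real_inner_comm d u, real_inner_comm g₁ u,
    real_inner_comm g₁ d, real_inner_comm g₁ g₀]
  field_simp
  ring

theorem hnag_linear_convergence_general {E : Type*} [NormedAddCommGroup E] [InnerProductSpace ℝ E]
    [CompleteSpace E] (f : E → ℝ) (f' : E → E) (μ L : ℝ)
    (hμ : 0 < μ) (hμL : μ ≤ L)
    (hf : ∀ x, HasGradientAt f (f' x) x)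
    (hsc : ∀ x y, f x - f y - ⟪f' y, x - y⟫ ≥ μ / 2 * ‖x - y‖ ^ 2)
    (hsmooth : ∀ x y, ‖f' x - f' y‖ ≤ L * ‖x - y‖)
    (xs : E)
    (α β : ℝ) (hα : α = Real.sqrt (2 * μ / L)) (hβ : β = 1 / (L * α))
    (xk yk xk1 yk1 : E)
    (hx : (1 / α) • (xk1 - xk) = yk - xk1 - β • f' xk)
    (hy : (1 / α) • (yk1 - yk) = xk1 - yk1 - (1 / μ) • f' xk1) :
    (f xk1 - f xs + μ / 2 * ‖yk1 - xs‖ ^ 2) - 1 / (2 * L) * ‖f' xk1‖ ^ 2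
      ≤ (1 + Real.sqrt (2 / (L / μ)))⁻¹ *
        ((f xk - f xs + μ / 2 * ‖yk - xs‖ ^ 2) - 1 / (2 * L) * ‖f' xk‖ ^ 2) := by
  have hL : 0 < L := hμ.trans_le hμL
  have hαpos : 0 < α := hα ▸ Real.sqrt_pos.2 (by positivity)
  have hμα : μ = L * α ^ 2 / 2 := by
    rw [hα, Real.sq_sqrt (by positivity)]
    field_simp
  have hrate : Real.sqrt (2 / (L / μ)) = α := by rw [hα, div_div_eq_mul_div]
  have hcoco := sq_norm_sub_gradient_le_bregman hL hf
    (fun x y => (hsc x y).trans' (by positivity)) hsmooth xk xk1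
  have hsc_xs := mul_le_mul_of_nonneg_left (hsc xs xk1) hαpos.le
  have hid := hnag_step_identity (xs := xs) hL.ne' hαpos.ne' hμα hβ hx hy
  have hgrad : 0 ≤ α / (2 * L) * ‖f' xk1‖ ^ 2 := by positivity
  have hgap : 0 ≤ μ * α * (1 + α) / 2 * ‖xk1 - yk1‖ ^ 2 := by positivity
  rw [hrate, le_inv_mul_iff₀ (by positivity)]
  linear_combination hcoco + hsc_xs + hid + hgrad + hgap

theorem hnag_linear_convergence {E : Type*} [NormedAddCommGroup E] [InnerProductSpace ℝ E]
    [CompleteSpace E] (f : E → ℝ) (f' : E → E) (μ L : ℝ)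
    (hμ : 0 < μ) (hμL : μ ≤ L)
    (hf : ∀ x, HasGradientAt f (f' x) x)
    (hsc : ∀ x y, f x - f y - ⟪f' y, x - y⟫ ≥ μ / 2 * ‖x - y‖ ^ 2)
    (hsmooth : ∀ x y, ‖f' x - f' y‖ ≤ L * ‖x - y‖)
    (xs : E) (hcrit : f' xs = 0)
    (α β : ℝ) (hα : α = Real.sqrt (2 * μ / L)) (hβ : β = 1 / (L * α))
    (xk yk xk1 yk1 : E)
    (hx : (1 / α) • (xk1 - xk) = yk - xk1 - β • f' xk)
    (hy : (1 / α) • (yk1 - yk) = xk1 - yk1 - (1 / μ) • f' xk1) :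
    (f xk1 - f xs + μ / 2 * ‖yk1 - xs‖ ^ 2) - 1 / (2 * L) * ‖f' xk1‖ ^ 2
      ≤ (1 + Real.sqrt (2 / (L / μ)))⁻¹ *
        ((f xk - f xs + μ / 2 * ‖yk - xs‖ ^ 2) - 1 / (2 * L) * ‖f' xk‖ ^ 2) :=
  hnag_linear_convergence_general f f' μ L hμ hμL hf hsc hsmooth xs α β hα hβ xk yk xk1 yk1 hx hy
end

section
/- Strong Lyapunov property with partial shift: Let f be differentiable, μ-strongly convex with minimizer x⋆, 0 ≤ μ̂ < μ, δ = μ − μ̂, β > 0. Define f_{−μ̂}(x) = f(x) − (μ̂/2)‖x−x⋆‖², E(x,y) = D_{f_{−μ̂}}(x, x⋆) + (μ/2)‖y − x⋆‖², and G(x,y) = (y − x − β∇f(x), x − y − (1/μ)∇f(x)). Then −⟨∇E(x,y), G(x,y)⟩ ≥ (2 − √(δ/μ)) E(x,y) + (1 − √(δ/μ)) Δ_f(x, x⋆) + β‖∇f_{−μ̂}(x)‖² + βμ̂⟨∇f_{−μ̂}(x), x − x⋆⟩, where Δ_f(x, x⋆) = D_f(x⋆, x) − D_f(x, x⋆). 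-/
open RealInnerProductSpace

/-! With `s = √(δ/μ)`, so that `δ = μ s²`, the `β`-terms on both sides agree exactly, because
`⟪u, ∇f x⟫ = ‖u‖² + μ̂ ⟪u, x - x⋆⟫` for `u = ∇f_{-μ̂} x`. What remains of the difference of the two sides is
`s (D_f(x⋆, x) - μ/2 ‖x - x⋆‖²) + (μ s / 2) ‖s (x - x⋆) - (y - x⋆)‖²`, and both terms are nonnegative,
the first by strong convexity. -/

section

variable {E : Type*} [NormedAddCommGroup E] [InnerProductSpace ℝ E]

theorem two_mul_mul_inner_le (s : ℝ) (v w : E) :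
    2 * s * ⟪v, w⟫ ≤ s ^ 2 * ‖v‖ ^ 2 + ‖w‖ ^ 2 := by
  have h := norm_sub_sq_real (s • v) w
  rw [norm_smul, real_inner_smul_left, mul_pow, Real.norm_eq_abs, sq_abs] at h
  nlinarith [sq_nonneg ‖s • v - w‖]

theorem neg_inner_lyapunov_field_eq (g x y xs : E) {μ : ℝ} (hμ : μ ≠ 0) (a β : ℝ) :
    -(⟪g - a • (x - xs), y - x - β • g⟫ + ⟪μ • (y - xs), x - y - (1 / μ) • g⟫)
      = ⟪g, x - xs⟫ - a * ‖x - xs‖ ^ 2 - (μ - a) * ⟪x - xs, y - xs⟫ + μ * ‖y - xs‖ ^ 2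
        + β * ⟪g - a • (x - xs), g⟫ := by
  have hyx : y - x = (y - xs) - (x - xs) := by abel
  have hxy : x - y = (x - xs) - (y - xs) := by abel
  rw [hyx, hxy]
  generalize x - xs = v, y - xs = w
  simp only [inner_sub_left, inner_sub_right, real_inner_smul_left, real_inner_smul_right,
    real_inner_self_eq_norm_sq, real_inner_comm v g, real_inner_comm v w, real_inner_comm w g]
  field_simp
  ring

theorem real_inner_sub_smul_self (g v : E) (a : ℝ) :
    ⟪g - a • v, g⟫ = ‖g - a • v‖ ^ 2 + a * ⟪g - a • v, v⟫ := by
  rw [← real_inner_self_eq_norm_sq, ← real_inner_smul_right, ← inner_add_right, sub_add_cancel]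

end

theorem strong_lyapunov_partial_shift_general {E : Type*} [NormedAddCommGroup E]
    [InnerProductSpace ℝ E] (f : E → ℝ) (f' : E → E) (μ μh β : ℝ)
    (hμ : 0 < μ) (hlt : μh < μ)
    (hsc : ∀ x y, f x - f y - ⟪f' y, x - y⟫ ≥ μ / 2 * ‖x - y‖ ^ 2)
    (xs : E) (hcrit : f' xs = 0) (x y : E) :
    -(⟪f' x - μh • (x - xs), y - x - β • f' x⟫
        + ⟪μ • (y - xs), x - y - (1 / μ) • f' x⟫)
      ≥ (2 - Real.sqrt ((μ - μh) / μ)) *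
          (((f x - μh / 2 * ‖x - xs‖ ^ 2) - (f xs - μh / 2 * ‖xs - xs‖ ^ 2)
              - ⟪f' xs - μh • (xs - xs), x - xs⟫) + μ / 2 * ‖y - xs‖ ^ 2)
        + (1 - Real.sqrt ((μ - μh) / μ)) *
          ((f xs - f x - ⟪f' x, xs - x⟫) - (f x - f xs - ⟪f' xs, x - xs⟫))
        + β * ‖f' x - μh • (x - xs)‖ ^ 2
        + β * μh * ⟪f' x - μh • (x - xs), x - xs⟫ := by
  set s := Real.sqrt ((μ - μh) / μ)
  have hs : 0 ≤ s := Real.sqrt_nonneg _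
  have hμh : μh = μ - μ * s ^ 2 := by
    rw [Real.sq_sqrt (div_nonneg (sub_nonneg.2 hlt.le) hμ.le)]
    field_simp
    ring
  have hbreg := mul_le_mul_of_nonneg_left (hsc xs x) hs
  have hyoung := mul_le_mul_of_nonneg_left (two_mul_mul_inner_le s (x - xs) (y - xs))
    (by positivity : 0 ≤ μ * s / 2)
  rw [neg_inner_lyapunov_field_eq _ _ _ _ hμ.ne', real_inner_sub_smul_self]
  rw [← neg_sub x xs, inner_neg_right, norm_neg] at hbreg
  simp only [hcrit, sub_self, smul_zero, sub_zero, inner_zero_left, norm_zero, ← neg_sub x xs,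
    inner_neg_right]
  clear_value s
  subst hμh
  linarith

theorem strong_lyapunov_partial_shift {E : Type*} [NormedAddCommGroup E]
    [InnerProductSpace ℝ E] [CompleteSpace E] (f : E → ℝ) (f' : E → E) (μ μh β : ℝ)
    (hμ : 0 < μ) (hμh : 0 ≤ μh) (hlt : μh < μ) (hβ : 0 < β)
    (hf : ∀ x, HasGradientAt f (f' x) x)
    (hsc : ∀ x y, f x - f y - ⟪f' y, x - y⟫ ≥ μ / 2 * ‖x - y‖ ^ 2)
    (xs : E) (hcrit : f' xs = 0) (x y : E) :
    -(⟪f' x - μh • (x - xs), y - x - β • f' x⟫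
        + ⟪μ • (y - xs), x - y - (1 / μ) • f' x⟫)
      ≥ (2 - Real.sqrt ((μ - μh) / μ)) *
          (((f x - μh / 2 * ‖x - xs‖ ^ 2) - (f xs - μh / 2 * ‖xs - xs‖ ^ 2)
              - ⟪f' xs - μh • (xs - xs), x - xs⟫) + μ / 2 * ‖y - xs‖ ^ 2)
        + (1 - Real.sqrt ((μ - μh) / μ)) *
          ((f xs - f x - ⟪f' x, xs - x⟫) - (f x - f xs - ⟪f' xs, x - xs⟫))
        + β * ‖f' x - μh • (x - xs)‖ ^ 2
        + β * μh * ⟪f' x - μh • (x - xs), x - xs⟫ :=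
  strong_lyapunov_partial_shift_general f f' μ μh β hμ hlt hsc xs hcrit x y
end

section
/- Scalar inequality for the shift schedule: for all a with 0 < a ≤ (3/4)(√2 − 1) and all ρ with 0 < ρ ≤ 1, one has 2(1 − (1 + a√(2ρ))^{−2/3}) ≤ √(2ρ)/(1 + √(2ρ)). -/
theorem shift_schedule_inequality (a ρ : ℝ) (ha : 0 < a) (ha' : a ≤ 3 / 4 * (Real.sqrt 2 - 1))
    (hρ : 0 < ρ) (hρ' : ρ ≤ 1) :
    2 * (1 - (1 + a * Real.sqrt (2 * ρ)) ^ (-(2 : ℝ) / 3))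
      ≤ Real.sqrt (2 * ρ) / (1 + Real.sqrt (2 * ρ)) := by
  set u := Real.sqrt (2 * ρ) with hu_def
  have hu : 0 < u := Real.sqrt_pos.mpr (by linarith)
  have hu2 : u ≤ Real.sqrt 2 := Real.sqrt_le_sqrt (by linarith)
  have hs2 : Real.sqrt 2 * Real.sqrt 2 = 2 := Real.mul_self_sqrt (by norm_num)
  have hs2' : (1 : ℝ) ≤ Real.sqrt 2 := by nlinarith
  set s := a * u with hs_def
  have hs : 0 < s := mul_pos ha hu
  -- Bernoulli: (1+s)^(2/3) ≤ 1 + (2/3)s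
  have h1 : (1 + s) ^ ((2:ℝ)/3) ≤ 1 + (2/3) * s := by
    simpa using rpow_one_add_le_one_add_mul_self (s := s) (by linarith)
      (p := (2:ℝ)/3) (by norm_num) (by norm_num)
  have hpos : (0:ℝ) < (1 + s) ^ ((2:ℝ)/3) := Real.rpow_pos_of_pos (by linarith) _
  have h2 : 1 - (2/3) * s ≤ (1 + s) ^ (-(2:ℝ)/3) := by
    have hrw : (1 + s) ^ (-(2:ℝ)/3) = ((1 + s) ^ ((2:ℝ)/3))⁻¹ := by
      rw [neg_div, Real.rpow_neg (by linarith)]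
    rw [hrw]
    have hinv1 : (1 + (2/3) * s)⁻¹ ≤ ((1 + s) ^ ((2:ℝ)/3))⁻¹ :=
      inv_anti₀ hpos h1
    have hinv2 : 1 - (2/3) * s ≤ (1 + (2/3) * s)⁻¹ := by
      rw [inv_eq_one_div, le_div_iff₀ (by positivity)]; nlinarith
    linarith
  have key : 2 * (1 - (1 + s) ^ (-(2:ℝ)/3)) ≤ (4/3) * s := by linarith
  have h3 : (4/3) * s ≤ (Real.sqrt 2 - 1) * u := by
    have : (4/3) * a ≤ Real.sqrt 2 - 1 := by linarith
    calc (4/3) * s = ((4/3) * a) * u := by ring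
    _ ≤ (Real.sqrt 2 - 1) * u := by nlinarith
  have h4 : (Real.sqrt 2 - 1) * u ≤ u / (1 + u) := by
    rw [ge_iff_le.symm, ge_iff_le, le_div_iff₀ (by linarith)]
    nlinarith
  linarith
end
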